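/- Let κ be a kernel on a measure space (S,μ) with 0 < μ(S) < ∞. Suppose there exists a measurable f : S → [0,∞) with f ∈ L²(μ) such that f = T_κ f + 1 holds μ-a.e. Then f is the unique nonnegative solution of this equation in L²(μ), and f(x) = ∑_{j=0}^∞ (T_κ^j 1)(x) for μ-a.e. x (i.e., f coincides with the smallest nonnegative solution). -/

import Mathlib

open MeasureTheory Filter Topology ENNReal

/-- The integral operator `T_κ` with kernel `κ`, acting on nonnegative functions:
`(T_κ f)(x) = ∫ κ(x,y) f(y) dμ(y)`. -/
noncomputable def Tker {S : Type*} [MeasurableSpace S] (κ : S → S → ℝ) (μ : Measure S)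
    (f : S → ℝ≥0∞) : S → ℝ≥0∞ :=
  fun x => ∫⁻ y, ENNReal.ofReal (κ x y) * f y ∂μ

section Aux

variable {S : Type*} [MeasurableSpace S] {μ : Measure S} {κ : S → S → ℝ}

lemma Tker_mono {h₁ h₂ : S → ℝ≥0∞} (hle : h₁ ≤ᵐ[μ] h₂) (x : S) :
    Tker κ μ h₁ x ≤ Tker κ μ h₂ x :=
  lintegral_mono_ae (hle.mono fun _ hy => mul_le_mul_right hy _)

lemma Tker_meas [SFinite μ] (hκ : Measurable (Function.uncurry κ)) {h : S → ℝ≥0∞}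
    (hh : Measurable h) : Measurable (Tker κ μ h) :=
  Measurable.lintegral_prod_right' (hκ.ennreal_ofReal.mul (hh.comp measurable_snd))

lemma Tker_iter_meas [SFinite μ] (hκ : Measurable (Function.uncurry κ)) (n : ℕ) :
    Measurable ((Tker κ μ)^[n] (fun _ => 1)) := by
  induction n with
  | zero => exact measurable_const
  | succ n ih =>
    rw [Function.iterate_succ_apply']
    exact Tker_meas hκ ih

lemma meas_slice (hκ : Measurable (Function.uncurry κ)) (x : S) {h : S → ℝ≥0∞}
    (hh : Measurable h) : Measurable (fun y => ENNReal.ofReal (κ x y) * h y) :=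
  ((hκ.comp measurable_prodMk_left).ennreal_ofReal).mul hh

lemma Tker_sum (hκ : Measurable (Function.uncurry κ)) {F : ℕ → S → ℝ≥0∞}
    (hF : ∀ j, Measurable (F j)) (s : Finset ℕ) (x : S) :
    Tker κ μ (fun y => ∑ j ∈ s, F j y) x = ∑ j ∈ s, Tker κ μ (F j) x := by
  simp only [Tker, Finset.mul_sum]
  exact lintegral_finset_sum s fun j _ => meas_slice hκ x (hF j)

lemma Tker_add (hκ : Measurable (Function.uncurry κ)) {h₁ h₂ : S → ℝ≥0∞}
    (hh₁ : Measurable h₁) (x : S) :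
    Tker κ μ (fun y => h₁ y + h₂ y) x = Tker κ μ h₁ x + Tker κ μ h₂ x := by
  simp only [Tker, mul_add]
  exact lintegral_add_left (meas_slice hκ x hh₁) _

/-- Any measurable finite L² solution of `f = T f + 1` equals the minimal solution a.e. -/
lemma key [IsFiniteMeasure μ]
    (hκmeas : Measurable (Function.uncurry κ))
    (hκsymm : ∀ x y, κ x y = κ y x)
    (f : S → ℝ≥0∞) (hf : Measurable f) (hffin : ∀ x, f x ≠ ∞)
    (hfL2 : (∫⁻ x, f x ^ 2 ∂μ) ≠ ∞)
    (hfeq : f =ᵐ[μ] fun x => Tker κ μ f x + 1) :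
    f =ᵐ[μ] fun x => ∑' j : ℕ, (Tker κ μ)^[j] (fun _ => 1) x := by
  set u : ℕ → S → ℝ≥0∞ := fun j => (Tker κ μ)^[j] (fun _ => 1) with hu
  have humeas : ∀ j, Measurable (u j) := Tker_iter_meas hκmeas
  set g : S → ℝ≥0∞ := fun x => ∑' j : ℕ, u j x with hg
  have hgmeas : Measurable g := Measurable.ennreal_tsum humeas
  -- partial sums are ≤ f a.e.
  have hpart : ∀ n : ℕ, ∀ᵐ x ∂μ, ∑ j ∈ Finset.range n, u j x ≤ f x := by
    intro n
    induction n with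
    | zero => filter_upwards with x; simp
    | succ n ih =>
      have hTle : ∀ x, Tker κ μ (fun y => ∑ j ∈ Finset.range n, u j y) x ≤ Tker κ μ f x :=
        Tker_mono ih
      filter_upwards [hfeq] with x hx
      calc ∑ j ∈ Finset.range (n+1), u j x
          = (∑ j ∈ Finset.range n, u (j+1) x) + u 0 x := Finset.sum_range_succ' _ n
        _ = Tker κ μ (fun y => ∑ j ∈ Finset.range n, u j y) x + 1 := by
            rw [Tker_sum hκmeas humeas]
            congr 1
            refine Finset.sum_congr rfl fun j _ => ?_
            simp only [hu, Function.iterate_succ_apply']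
        _ ≤ Tker κ μ f x + 1 := add_le_add_left (hTle x) 1
        _ = f x := hx.symm
  have hgle : g ≤ᵐ[μ] f := by
    filter_upwards [ae_all_iff.2 hpart] with x hx
    rw [hg]
    simp only
    rw [ENNReal.tsum_eq_iSup_nat]
    exact iSup_le hx
  have hgfin : ∀ᵐ x ∂μ, g x ≠ ∞ :=
    hgle.mono fun x hx => ne_top_of_le_ne_top (hffin x) hx
  -- g satisfies the equation pointwise
  have hgeq : ∀ x, g x = Tker κ μ g x + 1 := by
    intro x
    have h1 : Tker κ μ g x = ∑' j : ℕ, u (j+1) x := by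
      calc Tker κ μ g x = ∫⁻ y, ∑' j : ℕ, ENNReal.ofReal (κ x y) * u j y ∂μ := by
            simp only [Tker, hg]
            congr 1; ext y; rw [ENNReal.tsum_mul_left]
        _ = ∑' j : ℕ, ∫⁻ y, ENNReal.ofReal (κ x y) * u j y ∂μ :=
            lintegral_tsum fun j => (meas_slice hκmeas x (humeas j)).aemeasurable
        _ = ∑' j : ℕ, u (j+1) x := by
            refine tsum_congr fun j => ?_
            simp only [hu, Function.iterate_succ_apply']
            rfl
    rw [h1, hg]
    simp only
    rw [tsum_eq_zero_add' ENNReal.summable, add_comm]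
    rfl
  -- the difference h
  set h : S → ℝ≥0∞ := fun x => f x - g x with hh
  have hhmeas : Measurable h := hf.sub hgmeas
  have hhle : ∀ x, h x ≤ f x := fun x => tsub_le_self
  have hhfin : ∀ x, h x ≠ ∞ := fun x => ne_top_of_le_ne_top (hffin x) (hhle x)
  have hsplit : ∀ᵐ x ∂μ, f x = h x + g x :=
    hgle.mono fun x hx => (tsub_add_cancel_of_le hx).symm
  have hTf : ∀ x, Tker κ μ f x = Tker κ μ h x + Tker κ μ g x := by
    intro x
    have e1 : Tker κ μ f x = Tker κ μ (fun y => h y + g y) x := by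
      simp only [Tker]
      exact lintegral_congr_ae (hsplit.mono fun y hy => by simp only [hy])
    rw [e1, Tker_add hκmeas hhmeas]
  have heq : ∀ᵐ x ∂μ, h x = Tker κ μ h x := by
    filter_upwards [hfeq, hsplit, hgfin] with x h1 h2 h3
    have e : h x + g x = Tker κ μ h x + g x := by
      calc h x + g x = f x := h2.symm
        _ = Tker κ μ f x + 1 := h1
        _ = Tker κ μ h x + Tker κ μ g x + 1 := by rw [hTf x]
        _ = Tker κ μ h x + (Tker κ μ g x + 1) := add_assoc _ _ _
        _ = Tker κ μ h x + g x := by rw [← hgeq x]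
    rw [add_comm (h x), add_comm (Tker κ μ h x)] at e
    exact (ENNReal.add_right_inj h3).mp e
  -- integral argument
  have hI : (∫⁻ x, h x * f x ∂μ) ≠ ∞ := by
    refine ne_top_of_le_ne_top hfL2 (lintegral_mono fun x => ?_)
    rw [pow_two]
    exact mul_le_mul_left (hhle x) _
  have hswap : ∫⁻ x, h x * Tker κ μ f x ∂μ = ∫⁻ y, Tker κ μ h y * f y ∂μ := by
    calc ∫⁻ x, h x * Tker κ μ f x ∂μ
        = ∫⁻ x, ∫⁻ y, h x * (ENNReal.ofReal (κ x y) * f y) ∂μ ∂μ := by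
          refine lintegral_congr fun x => ?_
          simp only [Tker]
          exact (lintegral_const_mul' _ _ (hhfin x)).symm
      _ = ∫⁻ y, ∫⁻ x, h x * (ENNReal.ofReal (κ x y) * f y) ∂μ ∂μ := by
          refine lintegral_lintegral_swap ?_
          exact ((hhmeas.comp measurable_fst).mul
            (hκmeas.ennreal_ofReal.mul (hf.comp measurable_snd))).aemeasurable
      _ = ∫⁻ y, Tker κ μ h y * f y ∂μ := by
          refine lintegral_congr fun y => ?_
          have e1 : ∀ x, h x * (ENNReal.ofReal (κ x y) * f y)
              = (ENNReal.ofReal (κ y x) * h x) * f y := by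
            intro x; rw [hκsymm y x]; ring
          simp only [e1]
          rw [lintegral_mul_const' _ _ (hffin y)]
          rfl
  have main : (∫⁻ x, h x * f x ∂μ) = (∫⁻ x, h x * f x ∂μ) + ∫⁻ x, h x ∂μ := by
    calc (∫⁻ x, h x * f x ∂μ)
        = ∫⁻ x, (h x * Tker κ μ f x + h x) ∂μ := by
          refine lintegral_congr_ae (hfeq.mono fun x hx => ?_)
          simp only [hx]; ring
      _ = (∫⁻ x, h x * Tker κ μ f x ∂μ) + ∫⁻ x, h x ∂μ :=
          lintegral_add_left (hhmeas.mul (Tker_meas hκmeas hf)) _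
      _ = (∫⁻ x, Tker κ μ h x * f x ∂μ) + ∫⁻ x, h x ∂μ := by rw [hswap]
      _ = (∫⁻ x, h x * f x ∂μ) + ∫⁻ x, h x ∂μ := by
          congr 1
          exact lintegral_congr_ae (heq.mono fun x hx => by simp only [← hx])
  have hzero : (∫⁻ x, h x ∂μ) = 0 := by
    have e : (∫⁻ x, h x * f x ∂μ) + 0 = (∫⁻ x, h x * f x ∂μ) + ∫⁻ x, h x ∂μ := by
      rw [add_zero]; exact main
    exact ((ENNReal.add_right_inj hI).mp e).symm
  have hh0 : h =ᵐ[μ] 0 := (lintegral_eq_zero_iff hhmeas).mp hzero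
  filter_upwards [hsplit, hh0] with x h1 h2
  rw [h1, h2]
  simp

end Aux

/-- If the equation `f = T_κ f + 1` has a nonnegative solution `f ∈ L²(μ)`, then this
solution is unique among nonnegative `L²` solutions, and it coincides a.e. with the
minimal solution `g(x) = ∑_{j≥0} (T_κ^j 1)(x)`. -/
theorem stmt_4 {S : Type*} [MeasurableSpace S] (μ : Measure S)
    (hμ0 : μ Set.univ ≠ 0) (hμfin : μ Set.univ ≠ ∞)
    (κ : S → S → ℝ)
    (hκmeas : Measurable (Function.uncurry κ))
    (hκnn : ∀ x y, 0 ≤ κ x y)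
    (hκsymm : ∀ x y, κ x y = κ y x)
    (hκint : (∫⁻ x, ∫⁻ y, ENNReal.ofReal (κ x y) ∂μ ∂μ) ≠ ∞)
    (f : S → ℝ≥0∞) (hf : Measurable f) (hffin : ∀ x, f x ≠ ∞)
    (hfL2 : (∫⁻ x, f x ^ 2 ∂μ) ≠ ∞)
    (hfeq : f =ᵐ[μ] fun x => Tker κ μ f x + 1) :
    (∀ f' : S → ℝ≥0∞, Measurable f' → (∀ x, f' x ≠ ∞) → (∫⁻ x, f' x ^ 2 ∂μ) ≠ ∞ →
        (f' =ᵐ[μ] fun x => Tker κ μ f' x + 1) → f' =ᵐ[μ] f) ∧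
    f =ᵐ[μ] fun x => ∑' j : ℕ, (Tker κ μ)^[j] (fun _ => 1) x := by
  haveI : IsFiniteMeasure μ := ⟨hμfin.lt_top⟩
  have hkey := key hκmeas hκsymm f hf hffin hfL2 hfeq
  exact ⟨fun f' hm hfin hL2 heq =>
    (key hκmeas hκsymm f' hm hfin hL2 heq).trans hkey.symm, hkey⟩
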